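/- Let G be an inverse semigroup with idempotent set E, and let A be the unitization over ℂ of the semigroup algebra MonoidAlgebra ℂ G. Then for every g ∈ G and all e₀, e₁, …, e_n ∈ E (n ≥ 0) one has, in A: g · (e₀ · (1 − e₁) ⋯ (1 − e_n)) · g* = (g e₀ g*) · (1 − g e₁ g*) ⋯ (1 − g e_n g*). -/
import Mathlib


/-- An inverse semigroup: a semigroup with an involution `g ↦ g*` such that
`g** = g`, `(gh)* = h* g*`, `g g* g = g`, and any two idempotents commute. -/
class InverseSemigroup (G : Type*) extends Semigroup G, Star G where
  star_star : ∀ g : G, star (star g) = g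
  star_mul : ∀ g h : G, star (g * h) = star h * star g
  mul_star_mul_self : ∀ g : G, g * star g * g = g
  idem_mul_comm : ∀ e f : G, e * e = e → f * f = f → e * f = f * e

/-- The canonical image of `g : G` in the unitization over `ℂ` of the semigroup
algebra `MonoidAlgebra ℂ G`. -/
noncomputable def sgBasis {G : Type*} [InverseSemigroup G] (g : G) :
    Unitization ℂ (MonoidAlgebra ℂ G) :=
  Unitization.inr (MonoidAlgebra.single g (1 : ℂ))

lemma sgBasis_mul {G : Type*} [InverseSemigroup G] (a b : G) :
    sgBasis (a * b) = sgBasis a * sgBasis b := by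
  simp [sgBasis, ← Unitization.inr_mul, MonoidAlgebra.single_mul_single]

lemma star_mul_self_idem {G : Type*} [InverseSemigroup G] (g : G) :
    (star g * g) * (star g * g) = star g * g := by
  have h := InverseSemigroup.mul_star_mul_self g
  calc (star g * g) * (star g * g) = star g * (g * star g * g) := by
        simp [mul_assoc]
    _ = star g * g := by rw [h]

lemma sgConj_mul {G : Type*} [InverseSemigroup G] (g e₀ e : G) (he₀ : e₀ * e₀ = e₀) :
    (g * e₀ * star g) * (g * e * star g) = g * (e₀ * e) * star g := by
  have hc : e₀ * (star g * g) = (star g * g) * e₀ :=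
    InverseSemigroup.idem_mul_comm e₀ (star g * g) he₀ (star_mul_self_idem g)
  have h := InverseSemigroup.mul_star_mul_self g
  calc (g * e₀ * star g) * (g * e * star g)
      = g * (e₀ * (star g * g)) * (e * star g) := by simp [mul_assoc]
    _ = g * ((star g * g) * e₀) * (e * star g) := by rw [hc]
    _ = (g * star g * g) * (e₀ * e) * star g := by simp [mul_assoc]
    _ = g * (e₀ * e) * star g := by rw [h]

lemma idem_mul_idem {G : Type*} [InverseSemigroup G] (e₀ e : G)
    (he₀ : e₀ * e₀ = e₀) (he : e * e = e) : (e₀ * e) * (e₀ * e) = e₀ * e := by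
  have hc := InverseSemigroup.idem_mul_comm e e₀ he he₀
  calc (e₀ * e) * (e₀ * e) = e₀ * ((e * e₀) * e) := by simp [mul_assoc]
    _ = e₀ * ((e₀ * e) * e) := by rw [hc]
    _ = (e₀ * e₀) * (e * e) := by simp [mul_assoc]
    _ = e₀ * e := by rw [he₀, he]

/-- In the unitization of the semigroup algebra of an inverse semigroup `G`, for every
`g ∈ G` and idempotents `e₀, e₁, …, eₙ` one has
`g (e₀ (1-e₁) ⋯ (1-eₙ)) g* = (g e₀ g*) (1 - g e₁ g*) ⋯ (1 - g eₙ g*)`. -/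
theorem stmt_4 {G : Type*} [InverseSemigroup G] (g : G) (e₀ : G) (es : List G)
    (he₀ : e₀ * e₀ = e₀) (hes : ∀ e ∈ es, e * e = e) :
    sgBasis g * (sgBasis e₀ * (es.map fun e => 1 - sgBasis e).prod) * sgBasis (star g) =
      sgBasis (g * e₀ * star g) *
        (es.map fun e => 1 - sgBasis (g * e * star g)).prod := by
  induction es generalizing e₀ with
  | nil => simp [sgBasis_mul, mul_assoc]
  | cons e rest ih =>
    have he : e * e = e := hes e (by simp)
    have hrest : ∀ f ∈ rest, f * f = f := fun f hf => hes f (by simp [hf])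
    have key : sgBasis e₀ * ((1 - sgBasis e) * (rest.map fun f => 1 - sgBasis f).prod) =
        sgBasis e₀ * (rest.map fun f => 1 - sgBasis f).prod -
          sgBasis (e₀ * e) * (rest.map fun f => 1 - sgBasis f).prod := by
      rw [sgBasis_mul, ← mul_assoc, mul_sub, mul_one, sub_mul]
    simp only [List.map_cons, List.prod_cons]
    rw [key, mul_sub, sub_mul,
      ih e₀ he₀ hrest, ih (e₀ * e) (idem_mul_idem e₀ e he₀ he) hrest,
      sub_mul, one_mul, mul_sub]
    congr 1
    rw [← sgConj_mul g e₀ e he₀, sgBasis_mul, mul_assoc]
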